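/- arXiv:math/9910121 — 2 statements merged into one kernel-verified Lean document; each statement's English description precedes it below -/
import Mathlib

section
/- Let 1 → H →ⁱ G →ʲ K → 1 be a split short exact sequence of groups such that K acts trivially on the abelianization quotient H/[H,H]-wise at level 1, meaning the conjugation action of G on H₁/H₂ induced through K is trivial (here Hₖ denotes the k-th lower central series subgroup). Then for each k ≥ 1, the sequence of lower central series quotients 0 → Hₖ/Hₖ₊₁ → Gₖ/Gₖ₊₁ → Kₖ/Kₖ₊₁ → 0 is a split exact sequence of abelian groups. -/
/-!
Let `N = i(H) = ker j` and let `Nₗ` be its lower central series, computed inside `G`. The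
hypothesis says `⁅N, G⁆ ≤ N₁`; the three subgroups lemma propagates this to `⁅Nₗ, G⁆ ≤ Nₗ₊₁` and
then to `⁅Gₖ, Nₗ⁆ ≤ Nₖ₊ₗ₊₁`. Hence modulo `Nₖ₊₁` the elements of `Nₖ` are central and those of `Gₖ`
commute with `N`, so writing `g = n · s(j g)` and `t = m · s(j t)` gives
`⁅g, t⁆ ≡ s ⁅j g, j t⁆`. By induction `Gₖ = Nₖ · s(K)`, i.e. `g · s(j g)⁻¹ ∈ i(Hₖ)` for `g ∈ Gₖ`,
and both injectivity and exactness of the graded sequence follow from this decomposition.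
-/

open Subgroup
open scoped commutatorElement

theorem commutatorElement_mul_mul_of_commute {M : Type*} [Group M] {a s b t : M}
    (ha : ∀ z, Commute a z) (hsb : Commute s b) (hst : Commute ⁅s, t⁆ b) :
    ⁅a * s, b * t⁆ = ⁅s, t⁆ :=
  calc ⁅a * s, b * t⁆ = a * (s * (b * t) * s⁻¹) * a⁻¹ * (b * t)⁻¹ := by
        simp only [commutatorElement_def]; group
    _ = ⁅s, b * t⁆ := by rw [(ha _).eq, mul_inv_cancel_right, commutatorElement_def]
    _ = b * ⁅s, t⁆ * b⁻¹ := by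
        rw [commutatorElement_def, ← mul_assoc s b, hsb.eq]
        simp only [commutatorElement_def]
        group
    _ = ⁅s, t⁆ := by rw [← hst.eq, mul_inv_cancel_right]

theorem QuotientGroup.commute_mk_of_commutatorElement_mem {G : Type*} [Group G]
    {L : Subgroup G} [L.Normal] {x y : G} (h : ⁅x, y⁆ ∈ L) : Commute (x : G ⧸ L) y := by
  rw [← commutatorElement_eq_one_iff_commute]
  exact (map_commutatorElement (QuotientGroup.mk' L) x y).symm.trans
    ((QuotientGroup.eq_one_iff _).mpr h)

theorem MonoidHom.map_mem_lowerCentralSeries {G K : Type*} [Group G] [Group K] (f : G →* K)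
    {n : ℕ} {g : G} (hg : g ∈ (⊤ : Subgroup G).lowerCentralSeries n) :
    f g ∈ (⊤ : Subgroup K).lowerCentralSeries n :=
  lowerCentralSeries_mono n le_top (map_lowerCentralSeries ⊤ f n ▸ mem_map_of_mem f hg)

namespace Subgroup

variable {G : Type*} [Group G]

theorem commutator_commutator_le_of_rotate {A B C L : Subgroup G} [L.Normal]
    (h1 : ⁅⁅B, C⁆, A⁆ ≤ L) (h2 : ⁅⁅C, A⁆, B⁆ ≤ L) : ⁅⁅A, B⁆, C⁆ ≤ L := by
  simp only [← QuotientGroup.ker_mk' L, ← map_eq_bot_iff, map_commutator] at h1 h2 ⊢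
  exact commutator_commutator_eq_bot_of_rotate h1 h2

theorem commutator_lowerCentralSeries_le (S : Subgroup G) [S.Normal] (m n : ℕ) :
    ⁅S.lowerCentralSeries m, S.lowerCentralSeries n⁆ ≤ S.lowerCentralSeries (m + n + 1) := by
  induction n generalizing m with
  | zero => rfl
  | succ n ih =>
    rw [lowerCentralSeries_succ, commutator_comm]
    apply commutator_commutator_le_of_rotate
    · rw [commutator_comm S, ← lowerCentralSeries_succ]
      exact (ih (m + 1)).trans_eq (by congr 1; omega)
    · exact (commutator_mono (ih m) le_rfl).trans_eq (by rw [← lowerCentralSeries_succ]; congr 1)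

variable (N : Subgroup G) [N.Normal]

theorem commutator_lowerCentralSeries_top_le (h : ⁅N, ⊤⁆ ≤ N.lowerCentralSeries 1) (n : ℕ) :
    ⁅N.lowerCentralSeries n, ⊤⁆ ≤ N.lowerCentralSeries (n + 1) := by
  induction n with
  | zero => exact h
  | succ n ih =>
    apply commutator_commutator_le_of_rotate
    · exact (commutator_mono h le_rfl).trans
        ((commutator_lowerCentralSeries_le N 1 n).trans_eq (by congr 1; omega))
    · rw [commutator_comm ⊤]
      exact commutator_mono ih le_rfl

theorem commutator_lowerCentralSeries_top_lowerCentralSeries_le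
    (h : ⁅N, ⊤⁆ ≤ N.lowerCentralSeries 1) (k l : ℕ) :
    ⁅(⊤ : Subgroup G).lowerCentralSeries k, N.lowerCentralSeries l⁆ ≤
      N.lowerCentralSeries (k + l + 1) := by
  induction k generalizing l with
  | zero =>
    rw [commutator_comm]
    exact (commutator_lowerCentralSeries_top_le N h l).trans_eq (by congr 1; omega)
  | succ k ih =>
    apply commutator_commutator_le_of_rotate
    · rw [commutator_comm ⊤]
      refine (commutator_mono (commutator_lowerCentralSeries_top_le N h l) le_rfl).trans ?_
      rw [commutator_comm]
      exact (ih (l + 1)).trans_eq (by congr 1; omega)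
    · rw [commutator_comm (N.lowerCentralSeries l)]
      exact (commutator_mono (ih l) le_rfl).trans
        ((commutator_lowerCentralSeries_top_le N h _).trans_eq (by congr 1; omega))

end Subgroup

theorem MonoidHom.commutator_range_top_le_of_conj {H G : Type*} [Group H] [Group G] {i : H →* G}
    (htriv : ∀ (g : G) (a : H), ∃ b ∈ (⊤ : Subgroup H).lowerCentralSeries 1,
      g * i a * g⁻¹ = i (a * b)) :
    ⁅i.range, ⊤⁆ ≤ i.range.lowerCentralSeries 1 := by
  rw [MonoidHom.range_eq_map, ← map_lowerCentralSeries]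
  refine commutator_le.mpr ?_
  rintro _ ⟨a, -, rfl⟩ g -
  obtain ⟨b, hb, e⟩ := htriv g a
  refine ⟨a * b⁻¹ * a⁻¹, (lowerCentralSeries_normal _ 1).conj_mem _ (inv_mem hb) a, ?_⟩
  rw [commutatorElement_def, show i a * g * (i a)⁻¹ * g⁻¹ = i a * (g * i a * g⁻¹)⁻¹ by group, e]
  simp only [map_mul, map_inv]
  group

section Splitting

variable {G K : Type*} [Group G] [Group K] {j : G →* K} {s : K →* G}

theorem mem_sup_range_iff_mul_inv_mem (hs : Function.LeftInverse j s) {L : Subgroup G} [L.Normal]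
    (hL : L ≤ j.ker) {g : G} : g ∈ L ⊔ s.range ↔ g * (s (j g))⁻¹ ∈ L := by
  constructor
  · intro h
    obtain ⟨x, hx, _, ⟨c, rfl⟩, rfl⟩ := mem_sup_of_normal_left.mp h
    rwa [map_mul, hL hx, one_mul, hs c, mul_inv_cancel_right]
  · intro h
    rw [← inv_mul_cancel_right g (s (j g))]
    exact mul_mem (mem_sup_left h) (mem_sup_right ⟨_, rfl⟩)

theorem lowerCentralSeries_le_ker_lowerCentralSeries_sup_range (hs : Function.LeftInverse j s)
    (h : ⁅j.ker, ⊤⁆ ≤ j.ker.lowerCentralSeries 1) (k : ℕ) :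
    (⊤ : Subgroup G).lowerCentralSeries k ≤ j.ker.lowerCentralSeries k ⊔ s.range := by
  induction k with
  | zero =>
    intro g _
    rw [mem_sup_range_iff_mul_inv_mem hs (lowerCentralSeries_le_self _ _)]
    simp [MonoidHom.mem_ker, hs (j g)]
  | succ k ih =>
    refine commutator_le.mpr fun g hg t _ => ?_
    let π := QuotientGroup.mk' (j.ker.lowerCentralSeries (k + 1))
    have hcomm : ∀ x ∈ (⊤ : Subgroup G).lowerCentralSeries k, ∀ m ∈ j.ker, Commute (π x) (π m) :=
      fun x hx m hm => QuotientGroup.commute_mk_of_commutatorElement_mem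
        (commutator_lowerCentralSeries_top_lowerCentralSeries_le _ h k 0
          (commutator_mem_commutator hx hm))
    have hn : g * (s (j g))⁻¹ ∈ j.ker.lowerCentralSeries k :=
      (mem_sup_range_iff_mul_inv_mem hs (lowerCentralSeries_le_self _ _)).mp (ih hg)
    have hm : t * (s (j t))⁻¹ ∈ j.ker := by simp [MonoidHom.mem_ker, hs (j t)]
    have hsg : s (j g) ∈ (⊤ : Subgroup G).lowerCentralSeries k :=
      s.map_mem_lowerCentralSeries (j.map_mem_lowerCentralSeries hg)
    rw [mem_sup_range_iff_mul_inv_mem hs (lowerCentralSeries_le_self _ _), ← div_eq_mul_inv,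
      ← QuotientGroup.eq_iff_div_mem]
    change π ⁅g, t⁆ = π (s (j ⁅g, t⁆))
    calc π ⁅g, t⁆
        = ⁅π (g * (s (j g))⁻¹) * π (s (j g)), π (t * (s (j t))⁻¹) * π (s (j t))⁆ := by
          simp only [← map_mul, inv_mul_cancel_right, map_commutatorElement]
      _ = ⁅π (s (j g)), π (s (j t))⁆ := by
          refine commutatorElement_mul_mul_of_commute (fun z => ?_) (hcomm _ hsg _ hm) ?_
          · induction z using QuotientGroup.induction_on with | H z => ?_
            exact QuotientGroup.commute_mk_of_commutatorElement_mem
              (commutator_lowerCentralSeries_top_le _ h k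
                (commutator_mem_commutator hn (mem_top z)))
          · rw [← map_commutatorElement]
            exact hcomm _ (Subgroup.lowerCentralSeries_antitone _ k.le_succ
              (commutator_mem_commutator hsg (mem_top _))) _ hm
      _ = π (s (j ⁅g, t⁆)) := by simp only [map_commutatorElement]

theorem exists_mem_lowerCentralSeries_apply_eq_mul_inv {H : Type*} [Group H] {i : H →* G}
    (hexact : i.range = j.ker) (hs : Function.LeftInverse j s)
    (h : ⁅j.ker, ⊤⁆ ≤ j.ker.lowerCentralSeries 1) {n : ℕ} {g : G}
    (hg : g ∈ (⊤ : Subgroup G).lowerCentralSeries n) :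
    ∃ a ∈ (⊤ : Subgroup H).lowerCentralSeries n, i a = g * (s (j g))⁻¹ := by
  rw [← mem_map, map_lowerCentralSeries, ← MonoidHom.range_eq_map, hexact,
    ← mem_sup_range_iff_mul_inv_mem hs (lowerCentralSeries_le_self _ _)]
  exact lowerCentralSeries_le_ker_lowerCentralSeries_sup_range hs h n hg

end Splitting

theorem stmt_13_general {H G K : Type*} [Group H] [Group G] [Group K]
    (i : H →* G) (j : G →* K) (s : K →* G)
    (hi : Function.Injective i) (hexact : i.range = j.ker)
    (hsplit : j.comp s = MonoidHom.id K)
    (htriv : ∀ (g : G) (a : H), ∃ b ∈ (⊤ : Subgroup H).lowerCentralSeries 1,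
      g * i a * g⁻¹ = i (a * b)) :
    ∀ k : ℕ,
      (∀ a ∈ (⊤ : Subgroup H).lowerCentralSeries k, i a ∈ (⊤ : Subgroup G).lowerCentralSeries k) ∧
      (∀ a ∈ (⊤ : Subgroup H).lowerCentralSeries k,
        i a ∈ (⊤ : Subgroup G).lowerCentralSeries (k + 1) → a ∈ (⊤ : Subgroup H).lowerCentralSeries (k + 1)) ∧
      (∀ g ∈ (⊤ : Subgroup G).lowerCentralSeries k, j g ∈ (⊤ : Subgroup K).lowerCentralSeries k) ∧
      (∀ g ∈ (⊤ : Subgroup G).lowerCentralSeries k,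
        (j g ∈ (⊤ : Subgroup K).lowerCentralSeries (k + 1) ↔
          ∃ a ∈ (⊤ : Subgroup H).lowerCentralSeries k,
            g * (i a)⁻¹ ∈ (⊤ : Subgroup G).lowerCentralSeries (k + 1))) ∧
      (∀ c ∈ (⊤ : Subgroup K).lowerCentralSeries k,
        s c ∈ (⊤ : Subgroup G).lowerCentralSeries k ∧ j (s c) = c) := by
  have hs : Function.LeftInverse j s := DFunLike.congr_fun hsplit
  have hji (a : H) : j (i a) = 1 := by
    rw [← MonoidHom.mem_ker, ← hexact]
    exact ⟨a, rfl⟩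
  have hker : ⁅j.ker, ⊤⁆ ≤ j.ker.lowerCentralSeries 1 :=
    hexact ▸ i.commutator_range_top_le_of_conj htriv
  intro k
  refine ⟨fun a ha => i.map_mem_lowerCentralSeries ha, fun a _ hia => ?_,
    fun g hg => j.map_mem_lowerCentralSeries hg, fun g hg => ⟨fun hjg => ?_, ?_⟩,
    fun c hc => ⟨s.map_mem_lowerCentralSeries hc, hs c⟩⟩
  · obtain ⟨a', ha', e⟩ := exists_mem_lowerCentralSeries_apply_eq_mul_inv hexact hs hker hia
    rw [hji, map_one, inv_one, mul_one] at e
    rwa [← hi e]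
  · obtain ⟨a, ha, e⟩ := exists_mem_lowerCentralSeries_apply_eq_mul_inv hexact hs hker hg
    refine ⟨a, ha, ?_⟩
    rw [e, mul_inv_rev, inv_inv, ← mul_assoc]
    exact (lowerCentralSeries_normal _ _).conj_mem _ (s.map_mem_lowerCentralSeries hjg) g
  · rintro ⟨a, -, hmem⟩
    simpa [hji] using j.map_mem_lowerCentralSeries hmem

/-- **Falk–Randell.**  Let `1 → H → G → K → 1` be a split extension such that `K` acts
trivially on `H₁/H₂` (conjugation in `G` moves elements of `H` only by elements of the
commutator subgroup of `H`).  Then for every `k`, the induced sequence of lower central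
series quotients `0 → Hₖ/Hₖ₊₁ → Gₖ/Gₖ₊₁ → Kₖ/Kₖ₊₁ → 0` is split exact (stated
elementwise; here `lowerCentralSeries · k` is the paper's `(k+1)`-st term). -/
theorem stmt_13 {H G K : Type*} [Group H] [Group G] [Group K]
    (i : H →* G) (j : G →* K) (s : K →* G)
    (hi : Function.Injective i) (hexact : i.range = j.ker)
    (hsplit : j.comp s = MonoidHom.id K) (hsurj : Function.Surjective j)
    (htriv : ∀ (g : G) (a : H), ∃ b ∈ (⊤ : Subgroup H).lowerCentralSeries 1,
      g * i a * g⁻¹ = i (a * b)) :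
    ∀ k : ℕ,
      (∀ a ∈ (⊤ : Subgroup H).lowerCentralSeries k, i a ∈ (⊤ : Subgroup G).lowerCentralSeries k) ∧
      (∀ a ∈ (⊤ : Subgroup H).lowerCentralSeries k,
        i a ∈ (⊤ : Subgroup G).lowerCentralSeries (k + 1) → a ∈ (⊤ : Subgroup H).lowerCentralSeries (k + 1)) ∧
      (∀ g ∈ (⊤ : Subgroup G).lowerCentralSeries k, j g ∈ (⊤ : Subgroup K).lowerCentralSeries k) ∧
      (∀ g ∈ (⊤ : Subgroup G).lowerCentralSeries k,
        (j g ∈ (⊤ : Subgroup K).lowerCentralSeries (k + 1) ↔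
          ∃ a ∈ (⊤ : Subgroup H).lowerCentralSeries k,
            g * (i a)⁻¹ ∈ (⊤ : Subgroup G).lowerCentralSeries (k + 1))) ∧
      (∀ c ∈ (⊤ : Subgroup K).lowerCentralSeries k,
        s c ∈ (⊤ : Subgroup G).lowerCentralSeries k ∧ j (s c) = c) :=
  stmt_13_general i j s hi hexact hsplit htriv
end

section
/- Let G be a group whose lower central series quotients Gₖ/Gₖ₊₁ are generated by the images of elements x, y, w ∈ G with x ∈ G, y, w in a normal subgroup H, and suppose x⁻¹yx = wyw⁻¹ in G. Then in the associated graded Lie ring gr G = ⊕ₖ Gₖ/Gₖ₊₁ with bracket induced by commutators, the relation [x̄ + w̄, ȳ] = 0 holds, where x̄, ȳ, w̄ denote images in the respective graded pieces (x̄, w̄ in degree 1, ȳ in degree 1). -/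
open scoped commutatorElement

theorem commutatorElement_mul_eq_one_of_inv_mul_mul_eq {G : Type*} [Group G] {x y w : G}
    (h : x⁻¹ * y * x = w * y * w⁻¹) : ⁅x * w, y⁆ = 1 :=
  calc ⁅x * w, y⁆ = x * (w * y * w⁻¹) * x⁻¹ * y⁻¹ := by rw [commutatorElement_def]; group
    _ = 1 := by rw [← h]; group

-- `lowerCentralSeries` starts at index 0 with `⊤`, so index 2 is `G₃`.
theorem stmt_19_general {G : Type*} [Group G]
    (x y w : G)
    (h : x⁻¹ * y * x = w * y * w⁻¹) :
    ⁅x * w, y⁆ ∈ (⊤ : Subgroup G).lowerCentralSeries 2 := by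
  rw [commutatorElement_mul_eq_one_of_inv_mul_mul_eq h]
  exact one_mem _

/-- If `y, w` lie in a normal subgroup `H` of `G` and `x⁻¹yx = wyw⁻¹`, then the
commutator `[xw, y]` lies in the third lower central series term `G₃`
(`lowerCentralSeries G 2` in Mathlib's indexing), i.e. the relation
`[x̄ + w̄, ȳ] = 0` holds in the associated graded Lie ring `gr G`. -/
theorem stmt_19 {G : Type*} [Group G] (H : Subgroup G) [H.Normal]
    (x y w : G) (hy : y ∈ H) (hw : w ∈ H)
    (h : x⁻¹ * y * x = w * y * w⁻¹) :
    ⁅x * w, y⁆ ∈ (⊤ : Subgroup G).lowerCentralSeries 2 :=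
  stmt_19_general x y w h
end
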